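/- Let n ≥ 1, let I ⊆ ℝ be an open interval, let F_1,…,F_n : I → ℝ be smooth, and let k ∈ {1,…,n}. Then on I × ℝ^{n−1}: if k = n, ∂_1 A_n[F_1,…,F_n] = A_n[F_1′,…,F_n′]; and if 1 ≤ k ≤ n−1, ∂_{n+1−k} A_n[F_1,…,F_n](u¹,…,uⁿ) = A_k[F_1′,…,F_{k−1}′,F_k](u¹,…,u^k). -/

import Mathlib

/-- Partial derivative `∂_i f` with 1-based index `i ∈ {1,…,n}` (zero outside that
range). -/
noncomputable def pdN {n : ℕ} (i : ℕ) (f : (Fin n → ℝ) → ℝ) : (Fin n → ℝ) → ℝ :=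
  if h : 1 ≤ i ∧ i ≤ n then
    fun x => fderiv ℝ f x (Pi.single (⟨i - 1, by omega⟩ : Fin n) 1)
  else 0

/-- The coordinate function `u^i` with 1-based index `i ∈ {1,…,n}` (zero outside
that range). -/
def coordN {n : ℕ} (i : ℕ) : (Fin n → ℝ) → ℝ :=
  if h : 1 ≤ i ∧ i ≤ n then fun x => x ⟨i - 1, by omega⟩ else 0

/-- `a₀` solves the single Jordan block equation of size `n` on `U`:
for all `i, j ∈ {1,…,n}`,
`Σ_{s=i+1}^{n} u^{s−i+1} ∂_s ∂_j a₀ − Σ_{s=j+1}^{n} u^{s−j+1} ∂_s ∂_i a₀ = 0` on `U`. -/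
def SolvesJordan (n : ℕ) (U : Set (Fin n → ℝ)) (a₀ : (Fin n → ℝ) → ℝ) : Prop :=
  ∀ i j : ℕ, 1 ≤ i → i ≤ n → 1 ≤ j → j ≤ n → ∀ x ∈ U,
    (∑ s ∈ Finset.Icc (i + 1) n, coordN (s - i + 1) x * pdN s (pdN j a₀) x)
      - (∑ s ∈ Finset.Icc (j + 1) n, coordN (s - j + 1) x * pdN s (pdN i a₀) x) = 0

/-- Zero-extension convention `F_m := 0` for `m ≤ 0` (here `m = 0`). -/
def Fz (F : ℕ → ℝ → ℝ) : ℕ → ℝ → ℝ := fun m => if m = 0 then 0 else F m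

/-- The general solution
`A_n[F_1,…,F_n](u) = F_n(u¹) + Σ_{s≥1} (1/s!) Σ_{k_1=2}^{n} ⋯ Σ_{k_s=2}^{n}
u^{k_1}⋯u^{k_s} (d/du¹)^{s−1} F_{n+s−(k_1+⋯+k_s)}(u¹)`, with `F_m := 0` for `m ≤ 0`;
only the terms with `s ≤ n−1` are nonzero. -/
noncomputable def Afun (n : ℕ) (F : ℕ → ℝ → ℝ) : (Fin n → ℝ) → ℝ :=
  fun x => Fz F n (coordN 1 x) +
    ∑ s ∈ Finset.Icc 1 (n - 1), (1 / (Nat.factorial s : ℝ)) *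
      ∑ k ∈ Fintype.piFinset (fun _ : Fin s => Finset.Icc 2 n),
        (∏ j, coordN (k j) x) *
          iteratedDeriv (s - 1) (Fz F (n + s - ∑ j, k j)) (coordN 1 x)

open Finset

lemma iterZero (t : ℕ) : iteratedDeriv t (fun _ : ℝ => (0:ℝ)) = fun _ => 0 := by
  induction t with
  | zero => simp [iteratedDeriv_zero]
  | succ t ih =>
      rw [iteratedDeriv_succ, ih]
      funext y; simp

lemma contDiffOn_iter {f : ℝ → ℝ} {I : Set ℝ} (hIo : IsOpen I)
    (hf : ContDiffOn ℝ (⊤:ℕ∞) f I) (t : ℕ) : ContDiffOn ℝ (⊤:ℕ∞) (iteratedDeriv t f) I := by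
  induction t generalizing f with
  | zero => simpa [iteratedDeriv_zero] using hf
  | succ t ih =>
      rw [iteratedDeriv_succ']
      exact ih (hf.deriv_of_isOpen hIo (by exact_mod_cast (le_top : (⊤:ℕ∞)+1 ≤ ⊤)))

lemma hasDerivAt_iter {f : ℝ → ℝ} {I : Set ℝ} (hIo : IsOpen I)
    (hf : ContDiffOn ℝ (⊤:ℕ∞) f I) (t : ℕ) {x : ℝ} (hx : x ∈ I) :
    HasDerivAt (iteratedDeriv t f) (deriv (iteratedDeriv t f) x) x := by
  have h1 : DifferentiableAt ℝ (iteratedDeriv t f) x :=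
    ((contDiffOn_iter hIo hf t).differentiableOn (by simp)).differentiableAt (hIo.mem_nhds hx)
  exact h1.hasDerivAt

noncomputable def clmCoord (n i : ℕ) : (Fin n → ℝ) →L[ℝ] ℝ :=
  if h : 1 ≤ i ∧ i ≤ n then ContinuousLinearMap.proj (⟨i-1, by omega⟩ : Fin n) else 0

lemma hasFDerivAt_coordN {n : ℕ} (i : ℕ) (x : Fin n → ℝ) :
    HasFDerivAt (coordN i) (clmCoord n i) x := by
  by_cases h : 1 ≤ i ∧ i ≤ n
  · rw [coordN, clmCoord, dif_pos h, dif_pos h]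
    exact (ContinuousLinearMap.proj (R := ℝ) (φ := fun _ : Fin n => ℝ)
      (⟨i-1, by omega⟩ : Fin n)).hasFDerivAt
  · rw [coordN, clmCoord, dif_neg h, dif_neg h]
    exact hasFDerivAt_const _ _

lemma clmCoord_single {n i : ℕ} (hi : 1 ≤ i ∧ i ≤ n) (q : Fin n) :
    clmCoord n i (Pi.single q 1) = if i - 1 = (q:ℕ) then 1 else 0 := by
  rw [clmCoord, dif_pos hi]
  rw [ContinuousLinearMap.proj_apply, Pi.single_apply]
  congr 1
  rw [eq_comm, Fin.ext_iff]

lemma coordN_in {n i : ℕ} (hi : 1 ≤ i ∧ i ≤ n) (x : Fin n → ℝ) :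
    coordN i x = x ⟨i-1, by omega⟩ := by
  rw [coordN, dif_pos hi]

lemma Fz_deriv (F : ℕ → ℝ → ℝ) (m : ℕ) :
    Fz (fun m => deriv (F m)) m = deriv (Fz F m) := by
  unfold Fz
  split
  · funext y
    rw [Pi.zero_apply]
    exact (deriv_const y (0:ℝ)).symm
  · rfl

lemma prod_erase_eq {t : ℕ} (j : Fin (t+1)) (f : Fin (t+1) → ℝ) :
    ∏ i ∈ Finset.univ.erase j, f i = ∏ i : Fin t, f (j.succAbove i) := by
  symm
  apply Finset.prod_nbij (fun i => j.succAbove i)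
  · intro a _; simp [Finset.mem_erase, Fin.succAbove_ne]
  · exact (Fin.succAbove_right_injective).injOn
  · intro b hb
    simp only [Finset.coe_erase, Set.mem_diff, Set.mem_singleton_iff] at hb
    obtain ⟨i, hi⟩ := Fin.exists_succAbove_eq hb.2
    exact ⟨i, by simp, hi⟩
  · intro a _; rfl

lemma pick_coord {M : Type*} [AddCommMonoid M] (A : Finset ℕ) (t : ℕ) (j : Fin (t+1))
    {m : ℕ} (hm : m ∈ A) (f : (Fin (t+1) → ℕ) → M) :
    ∑ K ∈ Fintype.piFinset (fun _ : Fin (t+1) => A), (if K j = m then f K else 0)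
      = ∑ K ∈ Fintype.piFinset (fun _ : Fin t => A), f (j.insertNth m K) := by
  rw [← Finset.sum_filter]
  apply Finset.sum_nbij' (i := fun K => fun p => K (j.succAbove p))
    (j := fun K => j.insertNth m K)
  · intro K hK
    simp only [Finset.mem_filter, Fintype.mem_piFinset] at hK
    exact Fintype.mem_piFinset.2 fun p => hK.1 _
  · intro K hK
    simp only [Fintype.mem_piFinset] at hK
    refine Finset.mem_filter.2 ⟨Fintype.mem_piFinset.2 fun p => ?_, by rw [Fin.insertNth_apply_same]⟩
    rcases eq_or_ne p j with rfl | hp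
    · rw [Fin.insertNth_apply_same]; exact hm
    · obtain ⟨i, rfl⟩ := Fin.exists_succAbove_eq hp
      rw [Fin.insertNth_apply_succAbove]; exact hK i
  · intro K hK
    simp only [Finset.mem_filter] at hK
    funext p
    rcases eq_or_ne p j with rfl | hp
    · rw [Fin.insertNth_apply_same, hK.2]
    · obtain ⟨i, rfl⟩ := Fin.exists_succAbove_eq hp
      rw [Fin.insertNth_apply_succAbove]
  · intro K _
    funext p
    rw [Fin.insertNth_apply_succAbove]
  · intro K hK
    congr 1
    funext p
    rcases eq_or_ne p j with rfl | hp
    · rw [Fin.insertNth_apply_same, (Finset.mem_filter.1 hK).2]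
    · obtain ⟨i, rfl⟩ := Fin.exists_succAbove_eq hp
      rw [Fin.insertNth_apply_succAbove]

lemma inner_step {n : ℕ} (t m : ℕ) (hm : m ∈ Finset.Icc 2 n) (u : ℕ → ℝ) (g : ℕ → ℝ) :
    ∑ K ∈ Fintype.piFinset (fun _ : Fin (t+1) => Finset.Icc 2 n),
        g (∑ i, K i) * ∑ j : Fin (t+1),
          (if K j = m then ∏ i ∈ Finset.univ.erase j, u (K i) else 0)
      = (t+1 : ℝ) * ∑ K ∈ Fintype.piFinset (fun _ : Fin t => Finset.Icc 2 n),
          (∏ i, u (K i)) * g (m + ∑ i, K i) := by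
  have step1 : ∀ K : Fin (t+1) → ℕ,
      g (∑ i, K i) * ∑ j : Fin (t+1),
          (if K j = m then ∏ i ∈ Finset.univ.erase j, u (K i) else 0)
        = ∑ j : Fin (t+1),
          (if K j = m then (∏ i ∈ Finset.univ.erase j, u (K i)) * g (∑ i, K i) else 0) := by
    intro K
    rw [Finset.mul_sum]
    refine Finset.sum_congr rfl fun j _ => ?_
    split <;> ring
  simp only [step1]
  rw [Finset.sum_comm]
  have step2 : ∀ j : Fin (t+1),
      (∑ K ∈ Fintype.piFinset (fun _ : Fin (t+1) => Finset.Icc 2 n),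
        if K j = m then (∏ i ∈ Finset.univ.erase j, u (K i)) * g (∑ i, K i) else 0)
      = ∑ K ∈ Fintype.piFinset (fun _ : Fin t => Finset.Icc 2 n),
          (∏ i, u (K i)) * g (m + ∑ i, K i) := by
    intro j
    rw [pick_coord (Finset.Icc 2 n) t j hm]
    refine Finset.sum_congr rfl fun K _ => ?_
    congr 1
    · rw [prod_erase_eq]
      refine Finset.prod_congr rfl fun i _ => ?_
      rw [Fin.insertNth_apply_succAbove]
    · congr 1
      rw [Fin.sum_univ_succAbove (fun p => j.insertNth m K p) j,
        Fin.insertNth_apply_same]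
      congr 1
      refine Finset.sum_congr rfl fun i _ => ?_
      rw [Fin.insertNth_apply_succAbove]
  simp only [step2, Finset.sum_const, Finset.card_univ, Fintype.card_fin, nsmul_eq_mul]
  push_cast
  ring

lemma sum_ge {s : ℕ} (K : Fin s → ℕ) (hK : ∀ j, 2 ≤ K j) : 2 * s ≤ ∑ j, K j := by
  calc 2 * s = ∑ _j : Fin s, 2 := by simp [Finset.sum_const, mul_comm]
  _ ≤ ∑ j, K j := Finset.sum_le_sum (fun j _ => hK j)

lemma afun_hasFDerivAt {n : ℕ} (hn : 1 ≤ n) {I : Set ℝ} (hIo : IsOpen I)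
    {F : ℕ → ℝ → ℝ} (hF : ∀ m, 1 ≤ m → m ≤ n → ContDiffOn ℝ (⊤:ℕ∞) (F m) I)
    (x : Fin n → ℝ) (hx : coordN 1 x ∈ I) :
    HasFDerivAt (Afun n F)
      ((deriv (Fz F n) (coordN 1 x)) • clmCoord n 1 +
        ∑ s ∈ Finset.Icc 1 (n-1), (1 / (Nat.factorial s : ℝ)) •
          ∑ K ∈ Fintype.piFinset (fun _ : Fin s => Finset.Icc 2 n),
            ((∏ j, coordN (K j) x) •
               ((deriv (iteratedDeriv (s-1) (Fz F (n + s - ∑ j, K j))) (coordN 1 x)) •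
                  clmCoord n 1)
             + (iteratedDeriv (s-1) (Fz F (n + s - ∑ j, K j)) (coordN 1 x)) •
                 ∑ j : Fin s, (∏ i ∈ Finset.univ.erase j, coordN (K i) x) • clmCoord n (K j))) x := by
  have hFz : ∀ m : ℕ, m ≤ n → ContDiffOn ℝ (⊤:ℕ∞) (Fz F m) I := by
    intro m hm
    rcases Nat.eq_zero_or_pos m with rfl | hm1
    · simp only [Fz, ↓reduceIte]; exact contDiffOn_const
    · have := hF m hm1 hm
      simpa [Fz, Nat.pos_iff_ne_zero.1 hm1] using this
  have hiter : ∀ (m : ℕ), m ≤ n → ∀ t : ℕ,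
      HasDerivAt (iteratedDeriv t (Fz F m)) (deriv (iteratedDeriv t (Fz F m)) (coordN 1 x))
        (coordN 1 x) := fun m hm t => hasDerivAt_iter hIo (hFz m hm) t hx
  unfold Afun
  apply HasFDerivAt.add
  · have h1 : HasDerivAt (Fz F n) (deriv (Fz F n) (coordN 1 x)) (coordN 1 x) := by
      simpa [iteratedDeriv_zero] using hiter n le_rfl 0
    exact h1.comp_hasFDerivAt x (hasFDerivAt_coordN 1 x)
  · apply HasFDerivAt.fun_sum
    intro s hs
    apply HasFDerivAt.const_mul
    apply HasFDerivAt.fun_sum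
    intro K hK
    rw [Fintype.mem_piFinset] at hK
    have hidx : n + s - ∑ j, K j ≤ n := by
      have h2 : 2 * s ≤ ∑ j, K j := sum_ge K (fun j => (Finset.mem_Icc.1 (hK j)).1)
      omega
    have hprod : HasFDerivAt (fun y => ∏ j, coordN (K j) y)
        (∑ j : Fin s, (∏ i ∈ Finset.univ.erase j, coordN (K i) x) • clmCoord n (K j)) x :=
      HasFDerivAt.finset_prod (fun j _ => hasFDerivAt_coordN (K j) x)
    have hg : HasFDerivAt (fun y => iteratedDeriv (s-1) (Fz F (n + s - ∑ j, K j)) (coordN 1 y))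
        ((deriv (iteratedDeriv (s-1) (Fz F (n + s - ∑ j, K j))) (coordN 1 x)) • clmCoord n 1) x :=
      (hiter _ hidx (s-1)).comp_hasFDerivAt x (hasFDerivAt_coordN 1 x)
    exact hprod.mul hg

lemma iter_deriv_comm (t : ℕ) (f : ℝ → ℝ) :
    iteratedDeriv t (deriv f) = deriv (iteratedDeriv t f) := by
  rw [← iteratedDeriv_succ', iteratedDeriv_succ]

lemma case1 {n : ℕ} (hn : 1 ≤ n) {I : Set ℝ} (hIo : IsOpen I)
    {F : ℕ → ℝ → ℝ} (hF : ∀ m, 1 ≤ m → m ≤ n → ContDiffOn ℝ (⊤:ℕ∞) (F m) I)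
    (x : Fin n → ℝ) (hx : coordN 1 x ∈ I) :
    pdN 1 (Afun n F) x = Afun n (fun m => deriv (F m)) x := by
  have hD := afun_hasFDerivAt hn hIo hF x hx
  have h11 : (1:ℕ) ≤ 1 ∧ 1 ≤ n := ⟨le_rfl, hn⟩
  rw [pdN, dif_pos h11, hD.fderiv]
  set q : Fin n := ⟨1-1, by omega⟩ with hq
  have hq0 : (q : ℕ) = 0 := rfl
  simp only [ContinuousLinearMap.add_apply, ContinuousLinearMap.smul_apply,
    ContinuousLinearMap.coe_sum', Finset.sum_apply, smul_eq_mul]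
  rw [Afun]
  congr 1
  · rw [clmCoord_single h11, hq0, if_pos rfl, mul_one, Fz_deriv]
  · apply Finset.sum_congr rfl
    intro s hs
    congr 1
    apply Finset.sum_congr rfl
    intro K hK
    rw [Fintype.mem_piFinset] at hK
    have hz : ∀ j : Fin s, clmCoord n (K j) (Pi.single q 1) = 0 := by
      intro j
      have h2 := Finset.mem_Icc.1 (hK j)
      rw [clmCoord_single ⟨by omega, h2.2⟩, hq0, if_neg (by omega)]
    simp only [hz, mul_zero, Finset.sum_const_zero]
    rw [clmCoord_single h11, hq0, if_pos rfl, mul_one, Fz_deriv, iter_deriv_comm]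
    ring

lemma Fz_zero_eq (F : ℕ → ℝ → ℝ) : Fz F 0 = fun _ => (0:ℝ) := rfl

lemma coord_cast {n k : ℕ} (hkn : k ≤ n) (x : Fin n → ℝ) {i : ℕ} (hi : 1 ≤ i) (hik : i ≤ k) :
    coordN i (fun p : Fin k => x (Fin.castLE hkn p)) = coordN i x := by
  rw [coordN_in ⟨hi, hik⟩, coordN_in ⟨hi, by omega⟩]
  congr 1

lemma FzG_eq {k : ℕ} (F : ℕ → ℝ → ℝ) {m : ℕ} (hm : m ≠ k) :
    Fz (fun m => if m = k then F m else deriv (F m)) m = deriv (Fz F m) := by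
  unfold Fz
  rcases eq_or_ne m 0 with rfl | h0
  · simp only [if_true]
    funext y
    rw [Pi.zero_apply]
    exact (deriv_const y (0:ℝ)).symm
  · rw [if_neg h0, if_neg h0]
    show (if m = k then F m else deriv (F m)) = deriv (F m)
    rw [if_neg hm]

lemma erase_sum_ge {s : ℕ} (K : Fin s → ℕ) (hK : ∀ j, 2 ≤ K j) (j : Fin s) :
    2 * (s - 1) ≤ ∑ i ∈ Finset.univ.erase j, K i := by
  have hcard : (Finset.univ.erase j).card = s - 1 := by
    rw [Finset.card_erase_of_mem (Finset.mem_univ j), Finset.card_univ, Fintype.card_fin]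
  calc 2 * (s - 1) = ∑ _i ∈ Finset.univ.erase j, 2 := by
        rw [Finset.sum_const, hcard, smul_eq_mul, mul_comm]
    _ ≤ ∑ i ∈ Finset.univ.erase j, K i := Finset.sum_le_sum (fun i _ => hK i)

lemma rhs_eq {n k : ℕ} (hk1 : 1 ≤ k) (hkn1 : k ≤ n - 1) (hkn : k ≤ n)
    (F : ℕ → ℝ → ℝ) (x : Fin n → ℝ) :
    Afun k (fun m => if m = k then F m else deriv (F m)) (fun i : Fin k => x (Fin.castLE hkn i))
      = ∑ t ∈ Finset.Icc 0 (n-2), (1 / (Nat.factorial t : ℝ)) *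
          ∑ K ∈ Fintype.piFinset (fun _ : Fin t => Finset.Icc 2 n),
            (∏ i, coordN (K i) x) *
              iteratedDeriv t (Fz F (k + t - ∑ i, K i)) (coordN 1 x) := by
  have hvan : ∀ (t : ℕ) (K : Fin t → ℕ), k + t ≤ ∑ i, K i →
      iteratedDeriv t (Fz F (k + t - ∑ i, K i)) (coordN 1 x) = 0 := by
    intro t K h
    rw [show k + t - ∑ i, K i = 0 by omega, Fz_zero_eq, iterZero]
  rw [Afun]
  rw [show Finset.Icc 0 (n-2) = insert 0 (Finset.Icc 1 (n-2)) from by ext a; simp; omega,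
      Finset.sum_insert (by simp)]
  congr 1
  · -- heads
    rw [coord_cast hkn x le_rfl hk1]
    simp [Fz, (by omega : ¬ k = 0), iteratedDeriv_zero, Finset.univ_eq_empty]
  · refine Eq.trans (Finset.sum_congr rfl fun s hs => ?_)
      (Finset.sum_subset (Finset.Icc_subset_Icc le_rfl (by omega : k - 1 ≤ n - 2))
        (fun t h1 h2 => ?_))
    · -- per-s equality, s ∈ Icc 1 (k-1)
      rw [Finset.mem_Icc] at hs
      congr 1
      refine Eq.trans (Finset.sum_congr rfl fun K hK => ?_)
        (Finset.sum_subset (Fintype.piFinset_subset _ _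
          (fun _ => Finset.Icc_subset_Icc le_rfl hkn)) (fun K h1 h2 => ?_))
      · -- per-K equality, K ∈ [2,k]^s
        rw [Fintype.mem_piFinset] at hK
        have hsum := sum_ge K (fun j => (Finset.mem_Icc.1 (hK j)).1)
        have hne : k + s - ∑ i, K i ≠ k := by omega
        rw [coord_cast hkn x le_rfl hk1, FzG_eq F hne, iter_deriv_comm,
          ← iteratedDeriv_succ, (show s - 1 + 1 = s by omega)]
        congr 1
        refine Finset.prod_congr rfl fun j _ => ?_
        have h2 := Finset.mem_Icc.1 (hK j)
        exact coord_cast hkn x (by omega) h2.2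
      · -- vanishing for K ∈ [2,n]^s \ [2,k]^s
        have hKn := Fintype.mem_piFinset.1 h1
        rw [Fintype.mem_piFinset] at h2
        push_neg at h2
        obtain ⟨j, hj⟩ := h2
        have hj2 := Finset.mem_Icc.1 (hKn j)
        have hj3 : k + 1 ≤ K j := by
          rw [Finset.mem_Icc] at hj; omega
        have h5 : K j + ∑ i ∈ Finset.univ.erase j, K i = ∑ i, K i :=
          Finset.add_sum_erase _ _ (Finset.mem_univ j)
        have h4 := erase_sum_ge K (fun i => (Finset.mem_Icc.1 (hKn i)).1) j
        rw [hvan s K (by omega), mul_zero]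
    · -- vanishing for t ∈ Icc 1 (n-2) \ Icc 1 (k-1)
      rw [Finset.mem_Icc] at h1 h2
      rw [Finset.sum_eq_zero, mul_zero]
      intro K hK
      rw [Fintype.mem_piFinset] at hK
      have hsum := sum_ge K (fun j => (Finset.mem_Icc.1 (hK j)).1)
      rw [hvan t K (by omega), mul_zero]

lemma case2 {n k : ℕ} (hk1 : 1 ≤ k) (hkn1 : k ≤ n - 1) (hkn : k ≤ n) {I : Set ℝ} (hIo : IsOpen I)
    {F : ℕ → ℝ → ℝ} (hF : ∀ m, 1 ≤ m → m ≤ n → ContDiffOn ℝ (⊤:ℕ∞) (F m) I)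
    (x : Fin n → ℝ) (hx : coordN 1 x ∈ I) :
    pdN (n + 1 - k) (Afun n F) x
      = Afun k (fun m => if m = k then F m else deriv (F m))
          (fun i : Fin k => x (Fin.castLE hkn i)) := by
  have hn : 1 ≤ n := le_trans hk1 hkn
  have hmr : 1 ≤ n + 1 - k ∧ n + 1 - k ≤ n := ⟨by omega, by omega⟩
  have hD := afun_hasFDerivAt hn hIo hF x hx
  rw [pdN, dif_pos hmr, hD.fderiv, rhs_eq hk1 hkn1 hkn F x]
  simp only [ContinuousLinearMap.add_apply, ContinuousLinearMap.smul_apply,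
    ContinuousLinearMap.coe_sum', Finset.sum_apply, smul_eq_mul,
    clmCoord_single (⟨le_rfl, hn⟩ : 1 ≤ 1 ∧ 1 ≤ n)]
  have hcond : ¬ ((1:ℕ) - 1 = n + 1 - k - 1) := by omega
  simp only [if_neg hcond, mul_zero, zero_add]
  have hmid : (∑ s ∈ Finset.Icc 1 (n-1), (1 / (Nat.factorial s : ℝ)) *
      ∑ K ∈ Fintype.piFinset (fun _ : Fin s => Finset.Icc 2 n),
        iteratedDeriv (s-1) (Fz F (n + s - ∑ j, K j)) (coordN 1 x) *
          ∑ j : Fin s, (if K j = n + 1 - k then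
            ∏ i ∈ Finset.univ.erase j, coordN (K i) x else 0))
      = ∑ t ∈ Finset.Icc 0 (n-2), (1 / (Nat.factorial t : ℝ)) *
          ∑ K ∈ Fintype.piFinset (fun _ : Fin t => Finset.Icc 2 n),
            (∏ i, coordN (K i) x) *
              iteratedDeriv t (Fz F (k + t - ∑ i, K i)) (coordN 1 x) := by
    apply Finset.sum_nbij' (fun s => s - 1) (fun t => t + 1)
    · intro a ha; simp only [Finset.mem_Icc] at *; omega
    · intro a ha; simp only [Finset.mem_Icc] at *; omega
    · intro a ha; simp only [Finset.mem_Icc] at ha; omega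
    · intro a _; omega
    · intro s hs
      simp only [Finset.mem_Icc] at hs
      obtain ⟨t, rfl⟩ : ∃ t, s = t + 1 := ⟨s - 1, by omega⟩
      have hts : t + 1 - 1 = t := by omega
      rw [hts]
      rw [inner_step t (n+1-k) (Finset.mem_Icc.2 ⟨by omega, by omega⟩)
        (fun i => coordN i x) (fun c => iteratedDeriv t (Fz F (n + (t+1) - c)) (coordN 1 x))]
      have h1 : (Nat.factorial t : ℝ) ≠ 0 := Nat.cast_ne_zero.mpr (Nat.factorial_ne_zero t)
      rw [← mul_assoc]
      have hco : (1 / (Nat.factorial (t+1) : ℝ)) * ((t:ℝ)+1) = 1 / (Nat.factorial t : ℝ) := by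
        rw [Nat.factorial_succ]
        push_cast
        field_simp
      rw [hco]
      congr 1
      apply Finset.sum_congr rfl
      intro K _
      have hidx : n + (t+1) - (n + 1 - k + ∑ i, K i) = k + t - ∑ i, K i := by omega
      rw [hidx]
  refine Eq.trans (Finset.sum_congr rfl fun s hs => ?_) hmid
  congr 1
  refine Finset.sum_congr rfl fun K hK => ?_
  congr 1
  refine Finset.sum_congr rfl fun j _ => ?_
  rw [Fintype.mem_piFinset] at hK
  have h2 := Finset.mem_Icc.1 (hK j)
  rw [clmCoord_single ⟨by omega, h2.2⟩, mul_ite, mul_one, mul_zero]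
  refine if_congr ?_ rfl rfl
  show K j - 1 = n + 1 - k - 1 ↔ K j = n + 1 - k
  omega


/-- `∂_1 A_n[F_1,…,F_n] = A_n[F_1′,…,F_n′]` (case `k = n`), and for `1 ≤ k ≤ n−1`,
`∂_{n+1−k} A_n[F_1,…,F_n](u¹,…,uⁿ) = A_k[F_1′,…,F_{k−1}′,F_k](u¹,…,u^k)`. -/
theorem stmt17 {n : ℕ} (hn : 1 ≤ n) (I : Set ℝ) (hIo : IsOpen I)
    (hIc : I.OrdConnected)
    (F : ℕ → ℝ → ℝ) (hF : ∀ m : ℕ, 1 ≤ m → m ≤ n → ContDiffOn ℝ (⊤ : ℕ∞) (F m) I)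
    (k : ℕ) (hk1 : 1 ≤ k) (hkn : k ≤ n) :
    (k = n → ∀ x : Fin n → ℝ, coordN 1 x ∈ I →
      pdN 1 (Afun n F) x = Afun n (fun m => deriv (F m)) x) ∧
    (k ≤ n - 1 → ∀ x : Fin n → ℝ, coordN 1 x ∈ I →
      pdN (n + 1 - k) (Afun n F) x
        = Afun k (fun m => if m = k then F m else deriv (F m))
            (fun i : Fin k => x (Fin.castLE hkn i))) := by
  exact ⟨fun _ x hx => case1 hn hIo hF x hx,
    fun hkle x hx => case2 hk1 hkle hkn hIo hF x hx⟩
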